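/- Let the residual polynomials r_k be defined by r_0(λ) = 1, r_1(λ) = 1−λ, and r_{k+1}(λ) = (1−λ)[r_k(λ) + α_k(r_k(λ) − r_{k−1}(λ))] with α_1 = 0 and α_k = 1 for k ≥ 2 (the case β = −1 of the Nesterov iteration). Then for every k ≥ 1 and λ ∈ [0,1], r_k(λ) = (1−λ)^{(k+1)/2} · T_{k−1}(√(1−λ)), where T_n denotes the Chebyshev polynomial of the first kind of degree n. -/
import Mathlib


/-- The momentum sequence in the case `β = -1`: `α_1 = 0`, `α_k = 1` for `k ≥ 2`. -/
noncomputable def alphaNegOne (k : ℕ) : ℝ := if k = 1 then 0 else 1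

/-- Residual polynomials of Nesterov's accelerated Landweber iteration with momentum
sequence `alphaNegOne` (the case `β = -1`). -/
noncomputable def nesterovResNegOne : ℕ → ℝ → ℝ
  | 0, _ => 1
  | 1, l => 1 - l
  | (k + 2), l =>
      (1 - l) * (nesterovResNegOne (k + 1) l +
        alphaNegOne (k + 1) * (nesterovResNegOne (k + 1) l - nesterovResNegOne k l))

/-- Chebyshev polynomials of the first kind. -/
noncomputable def chebyshevT : ℕ → ℝ → ℝ
  | 0, _ => 1
  | 1, x => x
  | (n + 2), x => 2 * x * chebyshevT (n + 1) x - chebyshevT n x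

lemma nesterov_aux (l : ℝ) (hl : 0 ≤ 1 - l) :
    ∀ k : ℕ, nesterovResNegOne (k + 1) l =
      (Real.sqrt (1 - l)) ^ (k + 2) * chebyshevT k (Real.sqrt (1 - l))
  | 0 => by
      have hs : (Real.sqrt (1 - l)) ^ 2 = 1 - l := Real.sq_sqrt hl
      simp [nesterovResNegOne, chebyshevT, hs]
  | 1 => by
      have hs : (Real.sqrt (1 - l)) ^ 2 = 1 - l := Real.sq_sqrt hl
      simp only [nesterovResNegOne, chebyshevT, alphaNegOne, if_pos rfl, if_true]
      linear_combination (-(Real.sqrt (1-l)^2 + (1 - l))) * hs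
  | (k + 2) => by
      have h1 := nesterov_aux l hl k
      have h2 := nesterov_aux l hl (k + 1)
      have hs : (Real.sqrt (1 - l)) ^ 2 = 1 - l := Real.sq_sqrt hl
      show (1 - l) * (nesterovResNegOne (k + 2) l +
        alphaNegOne (k + 2) * (nesterovResNegOne (k + 2) l - nesterovResNegOne (k+1) l)) = _
      have ha : alphaNegOne (k + 2) = 1 := by simp [alphaNegOne]
      rw [ha, h1, h2]
      show _ = (Real.sqrt (1 - l)) ^ (k + 4) *
        (2 * Real.sqrt (1 - l) * chebyshevT (k + 1) (Real.sqrt (1 - l))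
          - chebyshevT k (Real.sqrt (1 - l)))
      linear_combination (-(2 * Real.sqrt (1-l) ^ (k+3) * chebyshevT (k+1) (Real.sqrt (1-l))
        - Real.sqrt (1-l) ^ (k+2) * chebyshevT k (Real.sqrt (1-l)))) * hs

theorem nesterov_residual_chebyshev (k : ℕ) (hk : 1 ≤ k)
    (l : ℝ) (hl : l ∈ Set.Icc (0 : ℝ) 1) :
    nesterovResNegOne k l =
      (1 - l) ^ (((k : ℝ) + 1) / 2) * chebyshevT (k - 1) (Real.sqrt (1 - l)) := by
  obtain ⟨m, rfl⟩ := Nat.exists_eq_add_of_le hk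
  have hl' : (0:ℝ) ≤ 1 - l := by linarith [hl.2]
  have h := nesterov_aux l hl' m
  have hrw : (1 - l) ^ ((((1 + m : ℕ) : ℝ) + 1) / 2) = (Real.sqrt (1 - l)) ^ (m + 2) := by
    rw [Real.sqrt_eq_rpow, ← Real.rpow_natCast ((1-l) ^ ((1:ℝ)/2)) (m+2),
      ← Real.rpow_mul hl']
    push_cast
    ring_nf
  rw [hrw]
  simpa [Nat.add_comm 1 m] using h
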